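/- arXiv:1402.3341 — 6 statements merged into one kernel-verified Lean document; each statement's English description precedes it below -/
import Mathlib

section
/- Let q be a prime power and m ≥ 1. Two distinct lines [l] = [l_1, …, l_{m+1}] and [l'] = [l'_1, …, l'_{m+1}] of the Wenger graph W_m(q) have a common neighbor in P if and only if there exist t ∈ F_q \ {0} and u ∈ F_q such that l_i − l'_i = t·u^{i−1} for all i = 1, …, m+1; moreover, in that case they have exactly one common neighbor. -/
open Finset

/-- Adjacency relation of the Wenger graph `W_m(q)`: a point `p = (p_1, …, p_{m+1})`
(0-indexed here) is adjacent to a line `l = (l_1, …, l_{m+1})` iff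
`l_{i+1} + p_{i+1} = l_i * p_1` for `i = 1, …, m`. -/
def wengerAdj {F : Type*} [Field F] {m : ℕ} (p l : Fin (m + 1) → F) : Prop :=
  ∀ i : Fin m, l i.succ + p i.succ = l i.castSucc * p 0

/-- The Wenger graph `W_m(q)` as a simple graph on `P ⊕ L`, where both `P` (points, `inl`)
and `L` (lines, `inr`) are copies of `F^{m+1}` for a finite field `F` with `q` elements. -/
def WengerGraph (F : Type*) [Field F] (m : ℕ) :
    SimpleGraph ((Fin (m + 1) → F) ⊕ (Fin (m + 1) → F)) where
  Adj x y :=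
    match x, y with
    | Sum.inl p, Sum.inr l => wengerAdj p l
    | Sum.inr l, Sum.inl p => wengerAdj p l
    | _, _ => False
  symm := ⟨by rintro (p | l) (p' | l') h <;> exact h⟩
  loopless := ⟨by rintro (p | l) h <;> exact h⟩

/-!
Subtracting the adjacency equations of a point `p` to `l` and to `l'` shows that `d = l - l'`
satisfies `d_{i+1} = d_i p_1`, i.e. `d` is geometric with ratio `p_1`; conversely, the neighbor of
`l` with first coordinate `u` is also a neighbor of `l'` as soon as `d` has ratio `u`. A neighbor
of `l` is determined by its first coordinate, and `d_2 = d_1 p_1` determines `p_1`, because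
`d_1 = 0` would force `d = 0`.
-/

theorem eq_mul_pow_of_forall_succ_eq_mul {M : Type*} [Monoid M] {n : ℕ} {d : Fin (n + 1) → M}
    {u : M} (h : ∀ i : Fin n, d i.succ = d i.castSucc * u) (i : Fin (n + 1)) :
    d i = d 0 * u ^ (i : ℕ) := by
  induction i using Fin.induction with
  | zero => simp
  | succ i ih => rw [h, ih, Fin.val_succ, Fin.val_castSucc, pow_succ, mul_assoc]

section WengerPoint

variable {F : Type*} [Field F] {m : ℕ}

def wengerPoint (l : Fin (m + 1) → F) (u : F) : Fin (m + 1) → F :=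
  Fin.cases u fun i => l i.castSucc * u - l i.succ

@[simp]
theorem wengerPoint_zero (l : Fin (m + 1) → F) (u : F) : wengerPoint l u 0 = u := rfl

@[simp]
theorem wengerPoint_succ (l : Fin (m + 1) → F) (u : F) (i : Fin m) :
    wengerPoint l u i.succ = l i.castSucc * u - l i.succ := rfl

theorem wengerAdj_wengerPoint (l : Fin (m + 1) → F) (u : F) : wengerAdj (wengerPoint l u) l :=
  fun i => by simp

theorem eq_wengerPoint_of_wengerAdj {p l : Fin (m + 1) → F} (h : wengerAdj p l) :
    p = wengerPoint l (p 0) := by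
  ext i
  induction i using Fin.cases with
  | zero => rfl
  | succ i => rw [wengerPoint_succ]; linear_combination h i

theorem wengerAdj_iff_sub_succ_eq_mul_of_wengerAdj {p l l' : Fin (m + 1) → F}
    (hl : wengerAdj p l) :
    wengerAdj p l' ↔
      ∀ i : Fin m, l i.succ - l' i.succ = (l i.castSucc - l' i.castSucc) * p 0 :=
  forall_congr' fun i => ⟨fun h => by linear_combination hl i - h,
    fun h => by linear_combination hl i - h⟩

end WengerPoint

theorem wenger_common_neighbor_general (m : ℕ) (hm : 1 ≤ m) (F : Type) [Field F]
    (l l' : Fin (m + 1) → F) (hll' : l ≠ l') :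
    ((∃ p : Fin (m + 1) → F, wengerAdj p l ∧ wengerAdj p l') ↔
      ∃ t u : F, t ≠ 0 ∧ ∀ i : Fin (m + 1), l i - l' i = t * u ^ (i : ℕ)) ∧
    ((∃ p : Fin (m + 1) → F, wengerAdj p l ∧ wengerAdj p l') →
      ∃! p : Fin (m + 1) → F, wengerAdj p l ∧ wengerAdj p l') := by
  have geometric {p} (hl : wengerAdj p l) (hl' : wengerAdj p l') (i : Fin (m + 1)) :
      l i - l' i = (l 0 - l' 0) * p 0 ^ (i : ℕ) :=
    eq_mul_pow_of_forall_succ_eq_mul (d := fun i => l i - l' i)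
      ((wengerAdj_iff_sub_succ_eq_mul_of_wengerAdj hl).1 hl') i
  have sub_zero_ne_zero {p} (hl : wengerAdj p l) (hl' : wengerAdj p l') : l 0 - l' 0 ≠ 0 :=
    fun h0 => hll' <| funext fun i => sub_eq_zero.1 <| by rw [geometric hl hl' i, h0, zero_mul]
  refine ⟨⟨fun ⟨p, hl, hl'⟩ => ⟨_, _, sub_zero_ne_zero hl hl', geometric hl hl'⟩, ?_⟩, ?_⟩
  · rintro ⟨t, u, -, hsub⟩
    refine ⟨wengerPoint l u, wengerAdj_wengerPoint l u,
      (wengerAdj_iff_sub_succ_eq_mul_of_wengerAdj (wengerAdj_wengerPoint l u)).2 fun i => ?_⟩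
    rw [hsub, hsub, Fin.val_succ, Fin.val_castSucc, wengerPoint_zero, pow_succ, mul_assoc]
  · rintro ⟨p, hl, hl'⟩
    refine ⟨p, ⟨hl, hl'⟩, fun p' ⟨hl₁, hl₁'⟩ => ?_⟩
    have h1 := (geometric hl₁ hl₁' ⟨1, by omega⟩).symm.trans (geometric hl hl' ⟨1, by omega⟩)
    have hp0 : p' 0 = p 0 := mul_left_cancel₀ (sub_zero_ne_zero hl hl') (by simpa using h1)
    rw [eq_wengerPoint_of_wengerAdj hl₁, eq_wengerPoint_of_wengerAdj hl, hp0]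

/-- Two distinct lines `l, l'` of `W_m(q)` have a common neighbor in `P`
iff there are `t ≠ 0` and `u` in `F_q` with `l_i - l'_i = t * u^(i-1)` for all
`i = 1, …, m+1`; moreover, in that case the common neighbor is unique. -/
theorem wenger_common_neighbor (q m : ℕ) (hm : 1 ≤ m) (F : Type) [Field F] [Fintype F]
    (hq : Fintype.card F = q) (l l' : Fin (m + 1) → F) (hll' : l ≠ l') :
    ((∃ p : Fin (m + 1) → F, wengerAdj p l ∧ wengerAdj p l') ↔
      ∃ t u : F, t ≠ 0 ∧ ∀ i : Fin (m + 1), l i - l' i = t * u ^ (i : ℕ)) ∧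
    ((∃ p : Fin (m + 1) → F, wengerAdj p l ∧ wengerAdj p l') →
      ∃! p : Fin (m + 1) → F, wengerAdj p l ∧ wengerAdj p l') :=
  wenger_common_neighbor_general m hm F l l' hll'
end

section
/- Let q be a prime power and 1 ≤ m ≤ q − 1. Then the Wenger graph W_m(q) is connected. -/
open Finset

/-!
Work with lines only. The point with first coordinate `b` on a line `l` is adjacent to a line
`l'` exactly when `l' - l` is a geometric progression `(c, cb, cb², …)`, so any two lines whose
difference is such a progression are joined by a path of length two, and hence `l` is connected
to `l + x` for every `x` in the span of the vectors `(1, b, …, bᵐ)`. Since `F` has at least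
`m + 1` elements, a Vandermonde matrix shows that these vectors span `F^{m+1}`, so all lines lie in
one component; every point lies on some line.
-/

theorem Matrix.span_row_vandermonde_eq_top {K : Type*} [Field K] {n : ℕ} {v : Fin n → K}
    (hv : Function.Injective v) : Submodule.span K (Set.range (Matrix.vandermonde v).row) = ⊤ :=
  (Matrix.linearIndependent_rows_of_det_ne_zero (det_vandermonde_ne_zero_iff.mpr hv)
    ).span_eq_top_of_card_eq_finrank' (by simp)

theorem span_range_pow_eq_top {K : Type*} [Field K] [Fintype K] {n : ℕ}
    (hn : n ≤ Fintype.card K) :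
    Submodule.span K (Set.range fun (b : K) (i : Fin n) => b ^ (i : ℕ)) = ⊤ := by
  obtain ⟨v⟩ := Function.Embedding.nonempty_of_card_le
    (by simpa using hn : Fintype.card (Fin n) ≤ Fintype.card K)
  rw [eq_top_iff, ← Matrix.span_row_vandermonde_eq_top v.injective]
  exact Submodule.span_mono (Set.range_comp_subset_range v fun b (i : Fin n) => b ^ (i : ℕ))

namespace WengerGraph

variable {F : Type*} [Field F] {m : ℕ}

@[simp] theorem adj_inl_inr {p l : Fin (m + 1) → F} :
    (WengerGraph F m).Adj (.inl p) (.inr l) ↔ wengerAdj p l := Iff.rfl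

@[simp] theorem adj_inr_inl {p l : Fin (m + 1) → F} :
    (WengerGraph F m).Adj (.inr l) (.inl p) ↔ wengerAdj p l := Iff.rfl

def lineThrough (p : Fin (m + 1) → F) (a : F) : Fin (m + 1) → F :=
  Fin.induction (motive := fun _ => F) a fun i x => x * p 0 - p i.succ

def pointOn (l : Fin (m + 1) → F) (b : F) : Fin (m + 1) → F :=
  Fin.cons b fun i => l i.castSucc * b - l i.succ

theorem wengerAdj_lineThrough (p : Fin (m + 1) → F) (a : F) : wengerAdj p (lineThrough p a) := by
  intro i
  simp only [lineThrough, Fin.induction_succ, sub_add_cancel]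

theorem wengerAdj_pointOn_iff {l l' : Fin (m + 1) → F} {b : F} :
    wengerAdj (pointOn l b) l' ↔ ∀ i : Fin m, (l' - l) i.succ = (l' - l) i.castSucc * b := by
  refine forall_congr' fun i => ?_
  simp only [pointOn, Fin.cons_succ, Fin.cons_zero, Pi.sub_apply]
  constructor <;> intro h <;> linear_combination h

theorem wengerAdj_pointOn (l : Fin (m + 1) → F) (b : F) : wengerAdj (pointOn l b) l := by
  simp [wengerAdj_pointOn_iff]

theorem reachable_inr_add_smul_pow (l : Fin (m + 1) → F) (c b : F) :
    (WengerGraph F m).Reachable (.inr l)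
      (.inr (l + c • fun i : Fin (m + 1) => b ^ (i : ℕ))) := by
  have h₁ : (WengerGraph F m).Adj (.inr l) (.inl (pointOn l b)) := wengerAdj_pointOn l b
  have h₂ : (WengerGraph F m).Adj (.inl (pointOn l b))
      (.inr (l + c • fun i : Fin (m + 1) => b ^ (i : ℕ))) := by
    rw [adj_inl_inr, wengerAdj_pointOn_iff]
    intro i
    simp only [Pi.sub_apply, Pi.add_apply, Pi.smul_apply, smul_eq_mul, add_sub_cancel_left,
      Fin.val_succ, Fin.val_castSucc, pow_succ]
    ring
  exact h₁.reachable.trans h₂.reachable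

theorem reachable_inr_add_of_mem_span {x : Fin (m + 1) → F}
    (hx : x ∈ Submodule.span F (Set.range fun (b : F) (i : Fin (m + 1)) => b ^ (i : ℕ)))
    (l : Fin (m + 1) → F) :
    (WengerGraph F m).Reachable (.inr l) (.inr (l + x)) := by
  induction hx using Submodule.closure_induction generalizing l with
  | zero => simp
  | add x y _ _ hx hy => simpa [add_assoc] using (hx l).trans (hy (l + x))
  | smul_mem c _ hb =>
    obtain ⟨b, rfl⟩ := hb
    exact reachable_inr_add_smul_pow l c b

end WengerGraph

open WengerGraph in
theorem wenger_connected_general (q m : ℕ) (F : Type) [Field F] [Fintype F]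
    (hq : Fintype.card F = q) (hm2 : m ≤ q - 1) :
    (WengerGraph F m).Connected := by
  have hspan := span_range_pow_eq_top (K := F) (n := m + 1)
    (by have := Fintype.card_pos (α := F); omega)
  have lines : ∀ l l', (WengerGraph F m).Reachable (.inr l) (.inr l') := fun l l' => by
    simpa using reachable_inr_add_of_mem_span (hspan ▸ Submodule.mem_top : l' - l ∈ _) l
  have near_line : ∀ x, ∃ l, (WengerGraph F m).Reachable x (.inr l) := by
    rintro (p | l)
    · exact ⟨lineThrough p 0, (adj_inl_inr.mpr (wengerAdj_lineThrough p 0)).reachable⟩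
    · exact ⟨l, .refl _⟩
  refine ⟨fun x y => ?_⟩
  obtain ⟨l, hl⟩ := near_line x
  obtain ⟨l', hl'⟩ := near_line y
  exact hl.trans ((lines l l').trans hl'.symm)

/-- For a prime power `q` and `1 ≤ m ≤ q − 1`, the Wenger graph
`W_m(q)` is connected. -/
theorem wenger_connected (q m : ℕ) (F : Type) [Field F] [Fintype F]
    (hq : Fintype.card F = q) (hm1 : 1 ≤ m) (hm2 : m ≤ q - 1) :
    (WengerGraph F m).Connected :=
  wenger_connected_general q m F hq hm2
end

section
/- Let q be a prime power and 1 ≤ m ≤ q − 1. Then the diameter of the Wenger graph W_m(q) is at most 2m + 2; that is, any two vertices of W_m(q) are joined by a path of length at most 2m + 2. -/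
open Finset

/-!
Lines through a fixed point `p` form the affine line `l + F • (1, p₀, p₀², …, p₀ᵐ)`. Hence going
from a line `l` to a point on it with first coordinate `x` and on to another line through that
point adds an arbitrary multiple of the power vector `(xᵏ)ₖ` to `l`. Since `q ≥ m + 1`, there are
`m + 1` distinct first coordinates `x₀ = p₀, x₁, …, xₘ`, whose power vectors form an invertible
Vandermonde matrix; so every line is reached from the point `p` by a walk of length `2m + 1`,
and one more edge joins any two vertices.
-/

open SimpleGraph

namespace Wenger

variable {F : Type*} [Field F] {m : ℕ}

def powers (m : ℕ) (x : F) : Fin (m + 1) → F := fun k => x ^ (k : ℕ)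

def pointOn (l : Fin (m + 1) → F) (b : F) : Fin (m + 1) → F :=
  Fin.cons b fun i => l i.castSucc * b - l i.succ

@[simp] theorem pointOn_zero (l : Fin (m + 1) → F) (b : F) : pointOn l b 0 = b := rfl

theorem wengerAdj_pointOn (l : Fin (m + 1) → F) (b : F) : wengerAdj (pointOn l b) l := by
  intro i
  simp only [pointOn, Fin.cons_succ, Fin.cons_zero]
  ring

theorem exists_wengerAdj (p : Fin (m + 1) → F) : ∃ l, wengerAdj p l :=
  ⟨Fin.induction 0 fun i li => li * p 0 - p i.succ,
    fun i => by simp only [Fin.induction_succ]; ring⟩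

theorem wengerAdj_add_smul_powers {p l : Fin (m + 1) → F} (h : wengerAdj p l) (t : F) :
    wengerAdj p (l + t • powers m (p 0)) := by
  intro i
  simp only [Pi.add_apply, Pi.smul_apply, smul_eq_mul, powers, Fin.val_succ,
    Fin.val_castSucc, pow_succ]
  linear_combination h i

theorem exists_walk_inr_add_smul_powers (l : Fin (m + 1) → F) (x c : F) :
    ∃ w : (WengerGraph F m).Walk (.inr l) (.inr (l + c • powers m x)), w.length = 2 := by
  have hp : (WengerGraph F m).Adj (.inr l) (.inl (pointOn l x)) := wengerAdj_pointOn l x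
  have hl : (WengerGraph F m).Adj (.inl (pointOn l x)) (.inr (l + c • powers m x)) :=
    pointOn_zero l x ▸ wengerAdj_add_smul_powers (wengerAdj_pointOn l x) c
  exact ⟨.cons hp (.cons hl .nil), rfl⟩

theorem exists_walk_inr_add_sum_smul_powers :
    ∀ (n : ℕ) (x c : Fin n → F) (l : Fin (m + 1) → F),
      ∃ w : (WengerGraph F m).Walk (.inr l) (.inr (l + ∑ j, c j • powers m (x j))),
        w.length = 2 * n
  | 0, _, _, l => ⟨.copy .nil rfl (by simp), by simp⟩
  | n + 1, x, c, l => by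
    obtain ⟨w₁, hw₁⟩ := exists_walk_inr_add_smul_powers l (x 0) (c 0)
    obtain ⟨w₂, hw₂⟩ := exists_walk_inr_add_sum_smul_powers n (Fin.tail x) (Fin.tail c)
      (l + c 0 • powers m (x 0))
    refine ⟨(w₁.append w₂).copy rfl (by rw [Fin.sum_univ_succ, add_assoc]; rfl), ?_⟩
    rw [Walk.length_copy, Walk.length_append, hw₁, hw₂]
    ring

theorem exists_sum_smul_powers_eq {x : Fin (m + 1) → F} (hx : Function.Injective x)
    (v : Fin (m + 1) → F) : ∃ c : Fin (m + 1) → F, ∑ j, c j • powers m (x j) = v := by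
  have hV : IsUnit (Matrix.vandermonde x) := by
    rw [Matrix.isUnit_iff_isUnit_det, isUnit_iff_ne_zero]
    exact Matrix.det_vandermonde_ne_zero_iff.mpr hx
  obtain ⟨c, hc⟩ := Matrix.vecMul_surjective_iff_isUnit.mpr hV v
  exact ⟨c, hc ▸ (Matrix.vecMul_eq_sum c _).symm⟩

theorem exists_walk_inl_inr [Fintype F] (hcard : m + 1 ≤ Fintype.card F)
    (p l : Fin (m + 1) → F) :
    ∃ w : (WengerGraph F m).Walk (.inl p) (.inr l), w.length = 2 * m + 1 := by
  classical
  obtain ⟨f⟩ : Nonempty (Fin (m + 1) ↪ F) :=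
    Function.Embedding.nonempty_of_card_le (by simpa using hcard)
  let x := f.trans (Equiv.swap (f 0) (p 0)).toEmbedding
  have hx0 : x 0 = p 0 := Equiv.swap_apply_left _ _
  obtain ⟨l₀, hl₀⟩ := exists_wengerAdj p
  obtain ⟨c, hc⟩ := exists_sum_smul_powers_eq x.injective (l - l₀)
  rw [Fin.sum_univ_succ, hx0] at hc
  have hp : (WengerGraph F m).Adj (.inl p) (.inr (l₀ + c 0 • powers m (p 0))) :=
    wengerAdj_add_smul_powers hl₀ (c 0)
  obtain ⟨w, hw⟩ := exists_walk_inr_add_sum_smul_powers m (Fin.tail x) (Fin.tail c)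
    (l₀ + c 0 • powers m (p 0))
  have hend : l₀ + c 0 • powers m (p 0) + ∑ j, Fin.tail c j • powers m (Fin.tail x j) = l := by
    rw [add_assoc]
    exact (congrArg (l₀ + ·) hc).trans (add_sub_cancel l₀ l)
  exact ⟨.cons hp (w.copy rfl (by rw [hend])), by rw [Walk.length_cons, Walk.length_copy, hw]⟩

end Wenger

theorem wenger_diameter_le_general (q m : ℕ) (F : Type) [Field F] [Fintype F]
    (hq : Fintype.card F = q) (hm2 : m ≤ q - 1)
    (u v : (Fin (m + 1) → F) ⊕ (Fin (m + 1) → F)) :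
    ∃ w : (WengerGraph F m).Walk u v, w.length ≤ 2 * m + 2 := by
  have hcard : m + 1 ≤ Fintype.card F := by have := Fintype.card_pos (α := F); omega
  rcases u with p | l <;> rcases v with p' | l'
  · obtain ⟨l', hl'⟩ := Wenger.exists_wengerAdj p'
    obtain ⟨w, hw⟩ := Wenger.exists_walk_inl_inr hcard p l'
    exact ⟨w.concat (show (WengerGraph F m).Adj (.inr l') (.inl p') from hl'), by simp [hw]⟩
  · obtain ⟨w, hw⟩ := Wenger.exists_walk_inl_inr hcard p l'
    exact ⟨w, by omega⟩
  · obtain ⟨w, hw⟩ := Wenger.exists_walk_inl_inr hcard p' l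
    exact ⟨w.reverse, by simp [hw]⟩
  · obtain ⟨w, hw⟩ := Wenger.exists_walk_inl_inr hcard (Wenger.pointOn l 0) l'
    exact ⟨.cons (show (WengerGraph F m).Adj (.inr l) (.inl (Wenger.pointOn l 0)) from
      Wenger.wengerAdj_pointOn l 0) w, by simp [hw]⟩

/-- For a prime power `q` and `1 ≤ m ≤ q − 1`, any two vertices of the
Wenger graph `W_m(q)` are joined by a walk of length at most `2m + 2`, i.e. the diameter
of `W_m(q)` is at most `2m + 2`. -/
theorem wenger_diameter_le (q m : ℕ) (F : Type) [Field F] [Fintype F]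
    (hq : Fintype.card F = q) (hm1 : 1 ≤ m) (hm2 : m ≤ q - 1)
    (u v : (Fin (m + 1) → F) ⊕ (Fin (m + 1) → F)) :
    ∃ w : (WengerGraph F m).Walk u v, w.length ≤ 2 * m + 2 :=
  wenger_diameter_le_general q m F hq hm2 u v
end

section
/- Let q be a prime power and let d and i be integers with 0 ≤ i ≤ d ≤ q − 1. Then the number of monic polynomials in F_q[X] of degree d having exactly i distinct roots in F_q equals C(q,i) · ∑_{k=0}^{d−i} (−1)^k · C(q−i,k) · q^{d−i−k}. -/
/-!
Sort the polynomials by their set of roots `S`. The monic polynomials of degree `d` vanishing on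
a set `T` are the multiples of `∏_{u ∈ T} (X - u)`: there are `q ^ (d - |T|)` of them when
`|T| ≤ d` and none otherwise. Inclusion–exclusion over the points outside `S` then counts those
whose root set is exactly `S`; the count depends only on `|S| = i`, and there are `C(q, i)`
such sets.
-/

open Finset Polynomial

namespace Finset

theorem card_inter_inf_compl {ι α : Type*} [Fintype α] [DecidableEq α] (s : Finset ι)
    (A : Finset α) (S : ι → Finset α) :
    (#(A ∩ s.inf fun i ↦ (S i)ᶜ) : ℤ) = ∑ t ∈ s.powerset, (-1 : ℤ) ^ #t * #(A ∩ t.inf S) := by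
  simpa [sum_boole, filter_mem_eq_inter, inter_comm] using
    inclusion_exclusion_sum_inf_compl s S fun a ↦ if a ∈ A then (1 : ℤ) else 0

theorem card_filter_card_eq_sum_powersetCard {α β : Type*} [Fintype β] [DecidableEq β]
    (s : Finset α) (g : α → Finset β) (i : ℕ) :
    #{a ∈ s | #(g a) = i} = ∑ S ∈ powersetCard i univ, #{a ∈ s | g a = S} := by
  rw [card_eq_sum_card_fiberwise (f := g) (t := powersetCard i univ)
    fun a ha ↦ mem_powersetCard_univ.2 (mem_filter.1 ha).2]
  refine sum_congr rfl fun S hS ↦ ?_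
  rw [filter_filter]
  exact congrArg card <| filter_congr fun a _ ↦
    ⟨And.right, fun h ↦ ⟨h ▸ mem_powersetCard_univ.1 hS, h⟩⟩

theorem sum_powerset_ite_card_le {β M : Type*} [AddCommMonoid M] (s : Finset β) (m : ℕ)
    (f : ℕ → M) :
    ∑ t ∈ s.powerset, (if #t ≤ m then f #t else 0) =
      ∑ k ∈ range (m + 1), (#s).choose k • f k := by
  -- both sides are the sum over `k ≤ min #s m`: the truncation and `choose` kill the rest
  have hsub : ∀ {n}, min #s m ≤ n → range (min #s m + 1) ⊆ range (n + 1) := fun h ↦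
    range_subset_range.2 (by omega)
  rw [sum_powerset_apply_card (fun k ↦ if k ≤ m then f k else 0),
    ← sum_subset (hsub (min_le_right _ _)), ← sum_subset (hsub (min_le_left _ _))]
  · refine sum_congr rfl fun k hk ↦ ?_
    rw [if_pos (by simp only [mem_range] at hk; omega)]
  · intro k hk hk'
    simp only [mem_range] at hk hk'
    rw [if_neg (by omega), smul_zero]
  · intro k hk hk'
    simp only [mem_range] at hk hk'
    rw [Nat.choose_eq_zero_of_lt (by omega), zero_smul]

end Finset

namespace Polynomial

variable {K : Type*} [Field K]

theorem prod_X_sub_C_dvd_iff (s : Finset K) (p : K[X]) :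
    ∏ u ∈ s, (X - C u) ∣ p ↔ ∀ u ∈ s, p.IsRoot u := by
  refine ⟨fun h u hu ↦ dvd_iff_isRoot.1 ((dvd_prod_of_mem (fun u ↦ X - C u) hu).trans h),
    fun h ↦ ?_⟩
  have hcop : (s : Set K).Pairwise (Function.onFun IsCoprime fun u ↦ X - C u) :=
    (pairwise_coprime_X_sub_C (s := id) Function.injective_id).set_pairwise _
  exact prod_dvd_of_coprime hcop fun u hu ↦ dvd_iff_isRoot.2 (h u hu)

abbrev MonicOfDegree (K : Type*) [Field K] (n : ℕ) := {p : K[X] // p.Monic ∧ p.natDegree = n}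

variable [Fintype K]

noncomputable instance (n : ℕ) : Fintype (MonicOfDegree K n) :=
  Fintype.ofEquiv _ ((monicEquivDegreeLT n).trans (degreeLTEquiv K n).toEquiv).symm

theorem card_monicOfDegree (n : ℕ) : Fintype.card (MonicOfDegree K n) = Fintype.card K ^ n := by
  rw [Fintype.card_congr ((monicEquivDegreeLT n).trans (degreeLTEquiv K n).toEquiv),
    Fintype.card_fun, Fintype.card_fin]

section Classical

open Classical

theorem card_filter_dvd {P : K[X]} (hP : P.Monic) (d : ℕ) :
    #{f : MonicOfDegree K d | P ∣ f.1} =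
      if P.natDegree ≤ d then Fintype.card K ^ (d - P.natDegree) else 0 := by
  split_ifs with hd
  · rw [← card_monicOfDegree, ← card_univ]
    symm
    refine card_nbij (fun g ↦ ⟨g.1 * P, g.2.1.mul hP, ?_⟩) ?_ ?_ ?_
    · rw [g.2.1.natDegree_mul hP, g.2.2]
      omega
    · intro g _
      simp
    · intro g _ g' _ h
      exact Subtype.ext (mul_left_injective₀ hP.ne_zero (congrArg Subtype.val h))
    · rintro ⟨f, hf, rfl⟩ hPf
      obtain ⟨g, rfl⟩ := (mem_filter.1 hPf).2
      have hg : g.Monic := hP.of_mul_monic_left hf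
      refine ⟨⟨g, hg, ?_⟩, mem_coe.2 (mem_univ _), Subtype.ext (mul_comm g P)⟩
      rw [hP.natDegree_mul hg]
      omega
  · rw [card_eq_zero, filter_eq_empty_iff]
    rintro ⟨f, hf, rfl⟩ - hPf
    exact hd (natDegree_le_of_dvd hPf hf.ne_zero)

theorem card_filter_forall_isRoot (T : Finset K) (d : ℕ) :
    #{f : MonicOfDegree K d | ∀ u ∈ T, f.1.IsRoot u} =
      if #T ≤ d then Fintype.card K ^ (d - #T) else 0 := by
  simp_rw [← prod_X_sub_C_dvd_iff]
  rw [card_filter_dvd (monic_prod_of_monic _ _ fun u _ ↦ monic_X_sub_C u),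
    natDegree_finsetProd_X_sub_C_eq_card]

theorem card_filter_roots_toFinset_eq {S : Finset K} {d : ℕ} (hS : #S ≤ d) :
    (#{f : MonicOfDegree K d | f.1.roots.toFinset = S} : ℤ) =
      ∑ k ∈ range (d - #S + 1), (-1 : ℤ) ^ k * ((Fintype.card K - #S).choose k : ℤ) *
        (Fintype.card K : ℤ) ^ (d - #S - k) := by
  set Z : K → Finset (MonicOfDegree K d) := fun u ↦ {f : MonicOfDegree K d | f.1.IsRoot u}
  have hinf (T : Finset K) :
      T.inf Z = ({f | ∀ u ∈ T, f.1.IsRoot u} : Finset (MonicOfDegree K d)) := by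
    ext f
    simp [Z, mem_inf]
  have hroots : ({f | f.1.roots.toFinset = S} : Finset (MonicOfDegree K d)) =
      S.inf Z ∩ Sᶜ.inf fun u ↦ (Z u)ᶜ := by
    ext f
    simp only [Z, Finset.ext_iff, mem_filter, mem_univ, true_and, mem_inter, mem_inf, mem_compl,
      Multiset.mem_toFinset, mem_roots f.2.1.ne_zero]
    exact ⟨fun h ↦ ⟨fun u hu ↦ (h u).2 hu, fun u hu hr ↦ hu ((h u).1 hr)⟩,
      fun h u ↦ ⟨fun hr ↦ by_contra fun hu ↦ h.2 u hu hr, h.1 u⟩⟩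
  rw [hroots, card_inter_inf_compl]
  calc ∑ t ∈ Sᶜ.powerset, (-1 : ℤ) ^ #t * #(S.inf Z ∩ t.inf Z)
      = ∑ t ∈ Sᶜ.powerset, if #t ≤ d - #S then
          (-1 : ℤ) ^ #t * (Fintype.card K : ℤ) ^ (d - #S - #t) else 0 := by
        refine sum_congr rfl fun t ht ↦ ?_
        have hdisj : Disjoint S t := disjoint_compl_right.mono_right (mem_powerset.1 ht)
        rw [← inf_eq_inter, ← inf_union, hinf, card_filter_forall_isRoot,
          card_union_of_disjoint hdisj, Nat.sub_sub]
        by_cases h : #t ≤ d - #S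
        · rw [if_pos (by omega), if_pos h]
          push_cast
          ring
        · rw [if_neg (by omega), if_neg h, Nat.cast_zero, mul_zero]
    _ = _ := by
        refine (sum_powerset_ite_card_le Sᶜ (d - #S)
          fun k ↦ (-1 : ℤ) ^ k * (Fintype.card K : ℤ) ^ (d - #S - k)).trans ?_
        refine sum_congr rfl fun k _ ↦ ?_
        rw [nsmul_eq_mul, card_compl]
        ring

theorem ncard_setOf_monic_ncard_roots (d i : ℕ) :
    {f : K[X] | f.Monic ∧ f.natDegree = d ∧ {u : K | f.eval u = 0}.ncard = i}.ncard =
      #{f : MonicOfDegree K d | #f.1.roots.toFinset = i} := by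
  rw [← card_map (.subtype _), ← Set.ncard_coe_finset]
  congr 1
  ext f
  simp only [Set.mem_ofPred_eq, coe_map, Function.Embedding.subtype_apply, Set.mem_image,
    mem_coe, mem_filter, mem_univ, true_and, Subtype.exists, exists_and_right, exists_eq_right]
  rw [exists_prop, and_assoc]
  refine and_congr_right fun hf ↦ and_congr_right fun _ ↦ ?_
  have hroots : {u : K | f.eval u = 0} = f.roots.toFinset := by
    ext u
    simp [mem_roots hf.ne_zero]
  rw [hroots, Set.ncard_coe_finset]

end Classical

end Polynomial

theorem count_monic_polynomials_with_roots_general (q d i : ℕ) (F : Type) [Field F] [Fintype F]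
    (hq : Fintype.card F = q) (hid : i ≤ d) :
    ({f : Polynomial F | f.Monic ∧ f.natDegree = d ∧
        {u : F | Polynomial.eval u f = 0}.ncard = i}.ncard : ℤ) =
      (q.choose i : ℤ) * ∑ k ∈ Finset.range (d - i + 1),
        (-1 : ℤ) ^ k * ((q - i).choose k : ℤ) * (q : ℤ) ^ (d - i - k) := by
  classical
  subst hq
  rw [ncard_setOf_monic_ncard_roots, card_filter_card_eq_sum_powersetCard, Nat.cast_sum,
    sum_congr rfl fun S hS ↦ by
      rw [card_filter_roots_toFinset_eq ((mem_powersetCard_univ.1 hS).trans_le hid),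
        mem_powersetCard_univ.1 hS],
    sum_const, card_powersetCard, card_univ, nsmul_eq_mul]

/-- Knopfmacher–Knopfmacher. For a prime power `q` and integers
`0 ≤ i ≤ d ≤ q − 1`, the number of monic polynomials of degree `d` over `F_q` with
exactly `i` distinct roots in `F_q` is `C(q,i)·∑_{k=0}^{d−i} (−1)^k·C(q−i,k)·q^{d−i−k}`. -/
theorem count_monic_polynomials_with_roots (q d i : ℕ) (F : Type) [Field F] [Fintype F]
    (hq : Fintype.card F = q) (hid : i ≤ d) (hd : d ≤ q - 1) :
    ({f : Polynomial F | f.Monic ∧ f.natDegree = d ∧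
        {u : F | Polynomial.eval u f = 0}.ncard = i}.ncard : ℤ) =
      (q.choose i : ℤ) * ∑ k ∈ Finset.range (d - i + 1),
        (-1 : ℤ) ^ k * ((q - i).choose k : ℤ) * (q : ℤ) ^ (d - i - k) :=
  count_monic_polynomials_with_roots_general q d i F hq hid
end

section
/- For every prime power q and every integer m with 1 ≤ m ≤ q − 1, the identity ∑_{i=0}^{m} C(q,i) · ∑_{d=i}^{m} ∑_{k=0}^{d−i} (−1)^k · C(q−i,k) · q^{d−i−k} = (q^{m+1} − 1)/(q − 1) holds; equivalently, (q−1) · ∑_{i=0}^{m} C(q,i) · ∑_{d=i}^{m} ∑_{k=0}^{d−i} (−1)^k · C(q−i,k) · q^{d−i−k} = q^{m+1} − 1. -/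
/-!
Swapping the sums over `i` and `d`, the left side becomes `(q - 1) * ∑_{d ≤ m} S_d` with
`S_d = ∑_{i ≤ d} C(q,i) ∑_{k ≤ d-i} (-1)^k C(q-i,k) q^(d-i-k)`, so it suffices that `S_d = q^d`
(a geometric sum then finishes). Collecting the terms of `S_d` by `s = i + k`, the coefficient
of `q^(d-s)` is `∑_i (-1)^(s-i) C(q,i) C(q-i,s-i) = C(q,s) ∑_i (-1)^(s-i) C(s,i) = C(q,s) (1-1)^s`,
which vanishes unless `s = 0`.
-/

open Finset

section

variable {R : Type*} [CommRing R]

theorem sum_neg_one_pow_mul_choose_mul_choose_sub (n s : ℕ) :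
    ∑ i ∈ range (s + 1), (-1 : R) ^ (s - i) * ((n.choose i : R) * ((n - i).choose (s - i) : R)) =
      if s = 0 then 1 else 0 := by
  have hchoose : ∀ i ∈ range (s + 1),
      (n.choose i : R) * ((n - i).choose (s - i) : R) = n.choose s * s.choose i := fun i hi => by
    rw [← Nat.cast_mul, ← Nat.choose_mul (Nat.lt_succ_iff.mp (mem_range.mp hi)), Nat.cast_mul]
  have hbinom : ∑ i ∈ range (s + 1), (-1 : R) ^ (s - i) * s.choose i = 0 ^ s := by
    simpa using (add_pow (1 : R) (-1) s).symm
  calc _ = (n.choose s : R) * ∑ i ∈ range (s + 1), (-1 : R) ^ (s - i) * s.choose i := by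
        rw [mul_sum]
        exact sum_congr rfl fun i hi => by rw [hchoose i hi]; ring
    _ = if s = 0 then 1 else 0 := by
        rw [hbinom]
        rcases eq_or_ne s 0 with rfl | hs <;> simp [*]

theorem sum_choose_mul_sum_neg_one_pow_choose (n d : ℕ) (x : R) :
    ∑ i ∈ range (d + 1), (n.choose i : R) * ∑ k ∈ range (d - i + 1),
      (-1) ^ k * ((n - i).choose k : R) * x ^ (d - i - k) = x ^ d := by
  calc _ = ∑ i ∈ range (d + 1), ∑ k ∈ range (d + 1 - i),
        (n.choose i : R) * ((-1) ^ k * ((n - i).choose k : R) * x ^ (d - i - k)) := by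
        refine sum_congr rfl fun i hi => ?_
        rw [mul_sum, Nat.sub_add_comm (Nat.lt_succ_iff.mp (mem_range.mp hi))]
    _ = ∑ s ∈ range (d + 1), x ^ (d - s) * ∑ i ∈ range (s + 1),
        (-1 : R) ^ (s - i) * ((n.choose i : R) * ((n - i).choose (s - i) : R)) := by
        rw [← sum_range_diag_flip]
        refine sum_congr rfl fun s _ => ?_
        rw [mul_sum]
        refine sum_congr rfl fun i hi => ?_
        rw [Nat.sub_sub_sub_cancel_right (Nat.lt_succ_iff.mp (mem_range.mp hi))]
        ring
    _ = x ^ d := by simp [sum_neg_one_pow_mul_choose_mul_choose_sub]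

end

theorem sum_range_sum_Icc_comm {M : Type*} [AddCommMonoid M] (m : ℕ) (f : ℕ → ℕ → M) :
    ∑ i ∈ range (m + 1), ∑ d ∈ Icc i m, f i d = ∑ d ∈ range (m + 1), ∑ i ∈ range (d + 1), f i d := by
  simp only [← Nat.Ico_zero_eq_range, ← Finset.Ico_add_one_right_eq_Icc]
  exact sum_Ico_Ico_comm 0 (m + 1) f

theorem wenger_multiplicity_identity_general (q m : ℕ) :
    ((q : ℤ) - 1) * ∑ i ∈ Finset.range (m + 1), (q.choose i : ℤ) *
        ∑ d ∈ Finset.Icc i m, ∑ k ∈ Finset.range (d - i + 1),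
          (-1 : ℤ) ^ k * ((q - i).choose k : ℤ) * (q : ℤ) ^ (d - i - k) =
      (q : ℤ) ^ (m + 1) - 1 := by
  have hswap := sum_range_sum_Icc_comm m fun i d => (q.choose i : ℤ) *
    ∑ k ∈ range (d - i + 1), (-1 : ℤ) ^ k * ((q - i).choose k : ℤ) * (q : ℤ) ^ (d - i - k)
  simp only [← mul_sum] at hswap
  rw [hswap]
  simp only [sum_choose_mul_sum_neg_one_pow_choose, mul_geom_sum]

/-- For every prime power `q` and every `1 ≤ m ≤ q − 1`,
`(q−1)·∑_{i=0}^{m} C(q,i)·∑_{d=i}^{m} ∑_{k=0}^{d−i} (−1)^k·C(q−i,k)·q^{d−i−k} = q^{m+1} − 1`,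
i.e. the sum equals `(q^{m+1} − 1)/(q − 1)`. -/
theorem wenger_multiplicity_identity (q m : ℕ) (hq : IsPrimePow q)
    (hm1 : 1 ≤ m) (hm2 : m ≤ q - 1) :
    ((q : ℤ) - 1) * ∑ i ∈ Finset.range (m + 1), (q.choose i : ℤ) *
        ∑ d ∈ Finset.Icc i m, ∑ k ∈ Finset.range (d - i + 1),
          (-1 : ℤ) ^ k * ((q - i).choose k : ℤ) * (q : ℤ) ^ (d - i - k) =
      (q : ℤ) ^ (m + 1) - 1 :=
  wenger_multiplicity_identity_general q m
end

section
/- Let q be a prime power and m ≥ 1. Then the graph H'_{m+2}(q) is isomorphic to the Wenger graph W_m(q), via the map sending each point (p_2, p_3, …, p_{m+2}) of H'_{m+2}(q) to the line [p_2, p_3, …, p_{m+2}] of W_m(q), and each line [l_1, l_3, l_4, …, l_{m+2}] of H'_{m+2}(q) to the point (−l_1, −l_3, −l_4, …, −l_{m+2}) of W_m(q). -/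
open Finset

/-- Adjacency relation of the graph `H'_{m+2}(q)`: the point `(p_2, …, p_{m+2})` is
adjacent to the line `[l_1, l_3, …, l_{m+2}]` iff `l_k − p_k = l_1 * p_{k−1}` for
`k = 3, …, m+2` (here both are encoded as vectors indexed by `Fin (m+1)`, the point via
`j ↦ p_{j+2}` and the line via `0 ↦ l_1`, `j ↦ l_{j+2}` for `j ≥ 1`). -/
def hPrimeAdj {F : Type*} [Field F] {m : ℕ} (p l : Fin (m + 1) → F) : Prop :=
  ∀ i : Fin m, l i.succ - p i.succ = l 0 * p i.castSucc

/-- The graph `H'_{m+2}(q)`, with points as `inl` and lines as `inr`. -/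
def HPrimeGraph (F : Type*) [Field F] (m : ℕ) :
    SimpleGraph ((Fin (m + 1) → F) ⊕ (Fin (m + 1) → F)) where
  Adj x y :=
    match x, y with
    | Sum.inl p, Sum.inr l => hPrimeAdj p l
    | Sum.inr l, Sum.inl p => hPrimeAdj p l
    | _, _ => False
  symm := ⟨by rintro (p | l) (p' | l') h <;> exact h⟩
  loopless := ⟨by rintro (p | l) h <;> exact h⟩

theorem hPrimeAdj_iff_wengerAdj_neg {F : Type*} [Field F] {m : ℕ} (p l : Fin (m + 1) → F) :
    hPrimeAdj p l ↔ wengerAdj (-l) p :=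
  forall_congr' fun i => by
    simp only [Pi.neg_apply]
    constructor <;> intro h <;> linear_combination -h

def hPrimeWengerIso (F : Type*) [Field F] (m : ℕ) : HPrimeGraph F m ≃g WengerGraph F m where
  toEquiv := (Equiv.sumCongr (Equiv.refl _) (Equiv.neg _)).trans (Equiv.sumComm _ _)
  map_rel_iff' := by
    rintro (p | l) (p' | l')
    · exact Iff.rfl
    · exact (hPrimeAdj_iff_wengerAdj_neg p l').symm
    · exact (hPrimeAdj_iff_wengerAdj_neg p' l).symm
    · exact Iff.rfl

theorem hPrime_iso_wenger_general (m : ℕ) (F : Type) [Field F] :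
    ∃ e : HPrimeGraph F m ≃g WengerGraph F m,
      (∀ p : Fin (m + 1) → F, e (Sum.inl p) = Sum.inr p) ∧
      (∀ l : Fin (m + 1) → F, e (Sum.inr l) = Sum.inl (fun j => -(l j))) :=
  ⟨hPrimeWengerIso F m, fun _ => rfl, fun _ => rfl⟩

/-- The map sending each point `(p_2, …, p_{m+2})` of `H'_{m+2}(q)` to
the line `[p_2, …, p_{m+2}]` of `W_m(q)` and each line `[l_1, l_3, …, l_{m+2}]` of
`H'_{m+2}(q)` to the point `(−l_1, −l_3, …, −l_{m+2})` of `W_m(q)` is a graph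
isomorphism from `H'_{m+2}(q)` to `W_m(q)`. -/
theorem hPrime_iso_wenger (q m : ℕ) (hm : 1 ≤ m) (F : Type) [Field F] [Fintype F]
    (hq : Fintype.card F = q) :
    ∃ e : HPrimeGraph F m ≃g WengerGraph F m,
      (∀ p : Fin (m + 1) → F, e (Sum.inl p) = Sum.inr p) ∧
      (∀ l : Fin (m + 1) → F, e (Sum.inr l) = Sum.inl (fun j => -(l j))) :=
  hPrime_iso_wenger_general m F
end
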